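/- arXiv:2105.11126 — 4 statements merged into one kernel-verified Lean document; each statement's English description precedes it below -/
import Mathlib

section
/- For i.i.d. random variables X_1,...,X_n each following the Laplace distribution with scale b, let Y = X_1 + ... + X_n. Then for any v ≥ b√n and any λ with 0 < λ < 2√2·v²/b, we have P(Y > λ) ≤ exp(−λ²/(8v²)). -/
/-!
The moment generating function of `Lap(b)` is `1 / (1 - b²t²)` for `|t| < 1/b`, which is at most
`exp (2b²t²)` as long as `b²t² ≤ 1/2`. By independence the sum `Y` then satisfies
`E[exp (tY)] ≤ exp (2nb²t²) ≤ exp (2v²t²)`, and the Chernoff bound at `t = λ/(4v²)` gives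
`P(Y ≥ λ) ≤ exp (-λ²/(8v²))`; the condition `λ < 2√2 v²/b` is what makes this `t`
admissible.
-/

open MeasureTheory ProbabilityTheory Real

/-- The Laplace distribution `Lap(b)` with density `(1/(2b)) exp(-|x|/b)`. -/
noncomputable def laplaceMeasure (b : ℝ) : Measure ℝ :=
  MeasureTheory.volume.withDensity (fun x => ENNReal.ofReal ((1 / (2 * b)) * Real.exp (-|x| / b)))

open Set

lemma exp_mul_sub_mul_abs_eqOn_Iic (a t : ℝ) :
    EqOn (fun x => exp (t * x - a * |x|)) (fun x => exp ((t + a) * x)) (Iic 0) := by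
  intro x hx
  simp only [abs_of_nonpos (mem_Iic.mp hx)]
  ring_nf

lemma exp_mul_sub_mul_abs_eqOn_Ioi (a t : ℝ) :
    EqOn (fun x => exp (t * x - a * |x|)) (fun x => exp ((t - a) * x)) (Ioi 0) := by
  intro x hx
  simp only [abs_of_pos (mem_Ioi.mp hx)]
  ring_nf

lemma integrable_exp_mul_sub_mul_abs {a t : ℝ} (h : |t| < a) :
    Integrable (fun x => exp (t * x - a * |x|)) := by
  obtain ⟨hneg, hpos⟩ := abs_lt.mp h
  rw [← integrableOn_univ, ← Iic_union_Ioi (a := (0 : ℝ))]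
  refine IntegrableOn.union ?_ ?_
  · exact (integrableOn_exp_mul_Iic (by linarith) 0).congr_fun
      (exp_mul_sub_mul_abs_eqOn_Iic a t).symm measurableSet_Iic
  · exact (integrableOn_exp_mul_Ioi (by linarith) 0).congr_fun
      (exp_mul_sub_mul_abs_eqOn_Ioi a t).symm measurableSet_Ioi

lemma integral_exp_mul_sub_mul_abs {a t : ℝ} (h : |t| < a) :
    ∫ x, exp (t * x - a * |x|) = 2 * a / (a ^ 2 - t ^ 2) := by
  obtain ⟨hneg, hpos⟩ := abs_lt.mp h
  have hint := integrable_exp_mul_sub_mul_abs h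
  rw [← intervalIntegral.integral_Iic_add_Ioi hint.integrableOn hint.integrableOn,
    setIntegral_congr_fun measurableSet_Iic (exp_mul_sub_mul_abs_eqOn_Iic a t),
    setIntegral_congr_fun measurableSet_Ioi (exp_mul_sub_mul_abs_eqOn_Ioi a t),
    integral_exp_mul_Iic (by linarith), integral_exp_mul_Ioi (by linarith)]
  simp only [mul_zero, exp_zero]
  have : t + a ≠ 0 := by linarith
  have : t - a ≠ 0 := by linarith
  have : a ^ 2 - t ^ 2 ≠ 0 := by nlinarith
  field_simp
  ring

section Laplace

variable {b : ℝ}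

lemma laplaceMeasure_density_toReal (hb : 0 < b) (x : ℝ) :
    (ENNReal.ofReal ((1 / (2 * b)) * exp (-|x| / b))).toReal = (2 * b)⁻¹ * exp (-|x| / b) := by
  rw [ENNReal.toReal_ofReal (by positivity), one_div]

lemma integral_laplaceMeasure (hb : 0 < b) (g : ℝ → ℝ) :
    ∫ x, g x ∂laplaceMeasure b = ∫ x, (2 * b)⁻¹ * exp (-|x| / b) * g x := by
  rw [laplaceMeasure, integral_withDensity_eq_integral_toReal_smul (by fun_prop)
    (ae_of_all _ fun _ => ENNReal.ofReal_lt_top)]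
  simp only [laplaceMeasure_density_toReal hb, smul_eq_mul]

lemma integrable_laplaceMeasure_iff (hb : 0 < b) {g : ℝ → ℝ} :
    Integrable g (laplaceMeasure b) ↔
      Integrable fun x => (2 * b)⁻¹ * exp (-|x| / b) * g x := by
  rw [laplaceMeasure, integrable_withDensity_iff_integrable_smul' (by fun_prop)
    (ae_of_all _ fun _ => ENNReal.ofReal_lt_top)]
  simp only [laplaceMeasure_density_toReal hb, smul_eq_mul]

lemma laplace_density_mul_exp_mul (t x : ℝ) :
    (2 * b)⁻¹ * exp (-|x| / b) * exp (t * x) = (2 * b)⁻¹ * exp (t * x - b⁻¹ * |x|) := by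
  rw [mul_assoc, ← exp_add]
  ring_nf

lemma integrable_exp_mul_laplaceMeasure (hb : 0 < b) {t : ℝ} (ht : |t| < b⁻¹) :
    Integrable (fun x => exp (t * x)) (laplaceMeasure b) := by
  rw [integrable_laplaceMeasure_iff hb]
  simp only [laplace_density_mul_exp_mul]
  exact (integrable_exp_mul_sub_mul_abs ht).const_mul _

lemma mgf_id_laplaceMeasure (hb : 0 < b) {t : ℝ} (ht : |t| < b⁻¹) :
    mgf id (laplaceMeasure b) t = (1 - (b * t) ^ 2)⁻¹ := by
  rw [mgf, integral_laplaceMeasure hb]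
  simp only [id, laplace_density_mul_exp_mul]
  rw [integral_const_mul, integral_exp_mul_sub_mul_abs ht]
  have : b⁻¹ ^ 2 - t ^ 2 ≠ 0 := by nlinarith [abs_nonneg t, sq_abs t]
  have : 1 - (b * t) ^ 2 ≠ 0 := by
    contrapose! this
    field_simp
    linarith
  field_simp

end Laplace

lemma inv_one_sub_le_exp_two_mul {x : ℝ} (h0 : 0 ≤ x) (h : x ≤ 1 / 2) :
    (1 - x)⁻¹ ≤ exp (2 * x) :=
  calc (1 - x)⁻¹ ≤ 2 * x + 1 := by
        rw [inv_le_iff_one_le_mul₀ (by linarith)]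
        nlinarith
    _ ≤ exp (2 * x) := add_one_le_exp _

lemma abs_lt_inv_of_sq_mul_le_half {b t : ℝ} (hb : 0 < b) (ht : (b * t) ^ 2 ≤ 1 / 2) :
    |t| < b⁻¹ := by
  have h := (sq_lt_one_iff_abs_lt_one (b * t)).mp (by linarith)
  rw [abs_mul, abs_of_pos hb] at h
  rwa [← one_div, lt_div_iff₀' hb]

lemma mgf_id_laplaceMeasure_le {b t : ℝ} (hb : 0 < b) (ht : (b * t) ^ 2 ≤ 1 / 2) :
    mgf id (laplaceMeasure b) t ≤ exp (2 * (b * t) ^ 2) := by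
  rw [mgf_id_laplaceMeasure hb (abs_lt_inv_of_sq_mul_le_half hb ht)]
  exact inv_one_sub_le_exp_two_mul (sq_nonneg _) ht

section Chernoff

variable {Ω ι : Type*} [MeasurableSpace Ω] {μ : Measure Ω} [IsProbabilityMeasure μ]
  [Fintype ι] {X : ι → Ω → ℝ} {b t : ℝ}

lemma measureReal_sum_ge_le_exp_of_laplace (hb : 0 < b) (hmeas : ∀ i, Measurable (X i))
    (hindep : iIndepFun X μ) (hlaw : ∀ i, μ.map (X i) = laplaceMeasure b) (ht0 : 0 ≤ t)
    (ht : (b * t) ^ 2 ≤ 1 / 2) (ε : ℝ) :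
    μ.real {ω | ε ≤ ∑ i, X i ω} ≤ exp (-t * ε + 2 * Fintype.card ι * (b * t) ^ 2) := by
  have hint : ∀ i ∈ Finset.univ, Integrable (fun ω => exp (t * X i ω)) μ := fun i _ => by
    have := integrable_exp_mul_laplaceMeasure hb (abs_lt_inv_of_sq_mul_le_half hb ht)
    rw [← hlaw i] at this
    exact (integrable_map_measure (by fun_prop) (hmeas i).aemeasurable).mp this
  have hmgf : ∀ i, mgf (X i) μ t ≤ exp (2 * (b * t) ^ 2) := fun i => by
    rw [← mgf_id_map (hmeas i).aemeasurable, hlaw i]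
    exact mgf_id_laplaceMeasure_le hb ht
  calc μ.real {ω | ε ≤ ∑ i, X i ω}
      = μ.real {ω | ε ≤ (∑ i, X i) ω} := by simp only [Finset.sum_apply]
    _ ≤ exp (-t * ε) * mgf (∑ i, X i) μ t :=
        measure_ge_le_exp_mul_mgf ε ht0 (hindep.integrable_exp_mul_sum hmeas hint)
    _ = exp (-t * ε) * ∏ i, mgf (X i) μ t := by rw [hindep.mgf_sum hmeas]
    _ ≤ exp (-t * ε) * ∏ _i : ι, exp (2 * (b * t) ^ 2) := by
        gcongr with i
        · exact fun i _ => mgf_nonneg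
        · exact hmgf i
    _ = exp (-t * ε + 2 * Fintype.card ι * (b * t) ^ 2) := by
        rw [Finset.prod_const, ← exp_nat_mul, ← exp_add, Finset.card_univ]
        ring_nf

end Chernoff

/-- Concentration of sums of i.i.d. Laplace random variables. -/
theorem stmt_0 {Ω : Type*} [MeasureSpace Ω] [IsProbabilityMeasure (ℙ : Measure Ω)]
    (n : ℕ) (b : ℝ) (hb : 0 < b) (X : Fin n → Ω → ℝ)
    (hmeas : ∀ i, Measurable (X i))
    (hindep : iIndepFun X ℙ)
    (hlaw : ∀ i, Measure.map (X i) ℙ = laplaceMeasure b)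
    (v lam : ℝ) (hv : b * Real.sqrt n ≤ v)
    (hlam0 : 0 < lam) (hlam1 : lam < 2 * Real.sqrt 2 * v ^ 2 / b) :
    ℙ {ω | lam < ∑ i, X i ω} ≤ ENNReal.ofReal (Real.exp (-(lam ^ 2) / (8 * v ^ 2))) := by
  obtain rfl | hv0 := ((by positivity : 0 ≤ b * √n).trans hv).eq_or_lt
  · rw [zero_pow two_ne_zero, mul_zero, zero_div] at hlam1
    linarith
  -- `t` minimises `-t * lam + 2 * v ^ 2 * t ^ 2`.
  set t := lam / (4 * v ^ 2)
  have hnb : n * b ^ 2 ≤ v ^ 2 := by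
    simpa [mul_pow, Nat.cast_nonneg, mul_comm] using pow_le_pow_left₀ (by positivity) hv 2
  have hbt : (b * t) ^ 2 ≤ 1 / 2 := by
    have hlb : b * lam < 2 * √2 * v ^ 2 := by rwa [lt_div_iff₀ hb, mul_comm] at hlam1
    have hbt' : b * t ≤ √2 / 2 := by
      rw [mul_div_assoc', div_le_div_iff₀ (by positivity) two_pos]
      linarith
    calc (b * t) ^ 2 ≤ (√2 / 2) ^ 2 := pow_le_pow_left₀ (by positivity) hbt' 2
      _ = 1 / 2 := by rw [div_pow, sq_sqrt zero_le_two]; norm_num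
  have hexp : -t * lam + 2 * Fintype.card (Fin n) * (b * t) ^ 2 ≤ -(lam ^ 2) / (8 * v ^ 2) := by
    have : -t * lam + 2 * v ^ 2 * t ^ 2 = -(lam ^ 2) / (8 * v ^ 2) := by
      simp only [t]; field_simp; ring
    rw [Fintype.card_fin, ← this]
    nlinarith [mul_le_mul_of_nonneg_right hnb (sq_nonneg t)]
  calc ℙ {ω | lam < ∑ i, X i ω} ≤ ℙ {ω | lam ≤ ∑ i, X i ω} :=
        measure_mono (ofPred_subset_ofPred.mpr fun _ => le_of_lt)
    _ = ENNReal.ofReal ((ℙ : Measure Ω).real {ω | lam ≤ ∑ i, X i ω}) :=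
        (ofReal_measureReal (measure_ne_top _ _)).symm
    _ ≤ _ := ENNReal.ofReal_le_ofReal <|
      (measureReal_sum_ge_le_exp_of_laplace hb hmeas hindep hlaw (by positivity) hbt lam).trans
        (exp_le_exp.mpr hexp)
end

section
/- Adding Laplace noise with scale Δf/ε to a real-valued function f with L1-sensitivity Δf yields an ε-differentially private mechanism: for any x, x' with |f(x) − f(x')| ≤ Δf and any measurable set U ⊆ ℝ, P(f(x) + Lap(Δf/ε) ∈ U) ≤ e^ε · P(f(x') + Lap(Δf/ε) ∈ U). -/
open MeasureTheory Real

theorem Real.exp_neg_abs_div_le_mul {b : ℝ} (hb : 0 ≤ b) (x y : ℝ) :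
    exp (-|x| / b) ≤ exp (|x - y| / b) * exp (-|y| / b) := by
  rw [← exp_add, exp_le_exp, ← add_div]
  gcongr
  linarith [abs_sub_abs_le_abs_sub y x, abs_sub_comm x y]

namespace MeasureTheory.Measure

theorem map_add_left_withDensity {G : Type*} [MeasurableSpace G] [AddGroup G] [MeasurableAdd G]
    (μ : Measure G) [μ.IsAddLeftInvariant] (g : G → ENNReal) (c : G) :
    (μ.withDensity g).map (c + ·) = μ.withDensity (fun z => g (-c + z)) := by
  ext s hs
  rw [map_apply (measurable_const_add c) hs, withDensity_apply _ (measurable_const_add c hs),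
    withDensity_apply _ hs, ← lintegral_indicator (measurable_const_add c hs),
    ← lintegral_indicator hs, ← lintegral_add_left_eq_self _ (-c)]
  congr 1
  ext z
  by_cases hz : z ∈ s <;> simp [Set.indicator, hz]

theorem withDensity_le_smul_withDensity {α : Type*} [MeasurableSpace α] (μ : Measure α)
    {g₁ g₂ : α → ENNReal} (hg₂ : Measurable g₂) {C : ENNReal} (h : ∀ z, g₁ z ≤ C * g₂ z) :
    μ.withDensity g₁ ≤ C • μ.withDensity g₂ := by
  rw [← withDensity_smul C hg₂]
  exact withDensity_mono (Filter.Eventually.of_forall h)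

end MeasureTheory.Measure

theorem laplaceMeasure_map_add_left_le {b : ℝ} (hb : 0 ≤ b) (c c' : ℝ) (U : Set ℝ) :
    (laplaceMeasure b).map (c + ·) U ≤
      ENNReal.ofReal (exp (|c - c'| / b)) * (laplaceMeasure b).map (c' + ·) U := by
  have hmeas : Measurable fun x : ℝ => ENNReal.ofReal ((1 / (2 * b)) * exp (-|x| / b)) := by
    fun_prop
  rw [laplaceMeasure, Measure.map_add_left_withDensity, Measure.map_add_left_withDensity]
  refine Measure.withDensity_le_smul_withDensity volume (hmeas.comp (measurable_const_add _))
    (fun z => ?_) U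
  rw [Function.comp_apply, ← ENNReal.ofReal_mul (exp_pos _).le]
  refine ENNReal.ofReal_le_ofReal ?_
  calc 1 / (2 * b) * exp (-|-c + z| / b)
      ≤ 1 / (2 * b) * (exp (|(-c + z) - (-c' + z)| / b) * exp (-|-c' + z| / b)) := by
        gcongr
        exact exp_neg_abs_div_le_mul hb _ _
    _ = exp (|c - c'| / b) * (1 / (2 * b) * exp (-|-c' + z| / b)) := by
        rw [show -c + z - (-c' + z) = -(c - c') by ring, abs_neg]
        ring

theorem stmt_4_general {X : Type*} (ε Δf : ℝ) (hε : 0 < ε) (hΔf : 0 < Δf)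
    (f : X → ℝ) (x x' : X) (hsens : |f x - f x'| ≤ Δf)
    (U : Set ℝ) :
    (laplaceMeasure (Δf / ε)).map (fun z => f x + z) U ≤
      ENNReal.ofReal (Real.exp ε) * (laplaceMeasure (Δf / ε)).map (fun z => f x' + z) U := by
  have hb : 0 < Δf / ε := div_pos hΔf hε
  have hratio : |f x - f x'| / (Δf / ε) ≤ ε := by
    rw [div_le_iff₀ hb]
    calc |f x - f x'| ≤ Δf := hsens
      _ = ε * (Δf / ε) := by field_simp
  calc (laplaceMeasure (Δf / ε)).map (fun z => f x + z) U
      ≤ ENNReal.ofReal (exp (|f x - f x'| / (Δf / ε))) *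
          (laplaceMeasure (Δf / ε)).map (fun z => f x' + z) U :=
        laplaceMeasure_map_add_left_le hb.le _ _ U
    _ ≤ ENNReal.ofReal (exp ε) * (laplaceMeasure (Δf / ε)).map (fun z => f x' + z) U := by
        gcongr

/-- The Laplace mechanism with scale `Δf/ε` is ε-differentially private. -/
theorem stmt_4 {X : Type*} (ε Δf : ℝ) (hε : 0 < ε) (hΔf : 0 < Δf)
    (f : X → ℝ) (x x' : X) (hsens : |f x - f x'| ≤ Δf)
    (U : Set ℝ) (hU : MeasurableSet U) :
    (laplaceMeasure (Δf / ε)).map (fun z => f x + z) U ≤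
      ENNReal.ofReal (Real.exp ε) * (laplaceMeasure (Δf / ε)).map (fun z => f x' + z) U :=
  stmt_4_general ε Δf hε hΔf f x x' hsens U
end

section
/- The Gaussian mechanism M(D) = f(D) + N(0, σ²) with σ > (Δf/ε)·√(2·log(1.25/δ)) satisfies (ε, δ)-differential privacy, where Δf = max over neighboring D, D' of |f(D) − f(D')| (L2 sensitivity for real-valued f), for any ε ∈ (0,1) and δ ∈ (0,1). -/
/-!
Write `c = f D - f D'` and `v = σ²`. The ratio of the densities of `N(f D, v)` and `N(f D', v)`
at `x` is `exp L(x)` with privacy loss `L(x) = ((x - f D')² - (x - f D)²) / (2v)`, so on the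
event `L ≤ ε` the first measure is at most `exp ε` times the second. Under `N(f D, v)` the loss is
`(2cZ + c²) / (2v)` with `Z ~ N(0, v)`; by symmetry of `Z` and `|c| ≤ Δf`, the event `L > ε`
has probability at most `P(Z ≥ t)` with `t = vε/Δf - Δf/2`. The tail bound
`P(Z ≥ t) ≤ exp(-t²/(2v))/2` for `t ≥ 0`, obtained by comparing with `N(t, v)` on `[t, ∞)`
(and a crude bound for `t < 0`, which forces `δ` close to `1`), turns the choice of `σ` into
`P(Z ≥ t) ≤ δ`.
-/

open MeasureTheory ProbabilityTheory Real
open scoped NNReal ENNReal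

section WithDensity

variable {α : Type*} [MeasurableSpace α] {ρ : Measure α} {p q : α → ℝ≥0∞} {c : ℝ≥0∞}

lemma withDensity_apply_le_mul_of_le_on (hq : Measurable q) {S : Set α} (hS : MeasurableSet S)
    (h : ∀ x ∈ S, p x ≤ c * q x) : ρ.withDensity p S ≤ c * ρ.withDensity q S := by
  rw [withDensity_apply _ hS, withDensity_apply _ hS, ← lintegral_const_mul c hq]
  exact setLIntegral_mono' hS h

lemma withDensity_le_mul_add_of_le_on (hq : Measurable q) {G U : Set α} (hG : MeasurableSet G)
    (hU : MeasurableSet U) (h : ∀ x ∈ G, p x ≤ c * q x) {δ : ℝ≥0∞}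
    (hδ : ρ.withDensity p Gᶜ ≤ δ) :
    ρ.withDensity p U ≤ c * ρ.withDensity q U + δ :=
  calc ρ.withDensity p U ≤ ρ.withDensity p (U ∩ G) + ρ.withDensity p (U \ G) :=
        measure_le_inter_add_sdiff _ U G
    _ ≤ c * ρ.withDensity q (U ∩ G) + δ :=
        add_le_add (withDensity_apply_le_mul_of_le_on hq (hU.inter hG) fun x hx => h x hx.2)
          ((measure_mono (Set.sdiff_subset_compl U G)).trans hδ)
    _ ≤ c * ρ.withDensity q U + δ := by gcongr; exact Set.inter_subset_left

end WithDensity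

lemma preimage_mul_Ioi_sub_sq_subset_Ici {a b Δ : ℝ} (ha : 0 ≤ a) (hb : 0 ≤ b) (hbΔ : b ≤ Δ) :
    (b * ·) ⁻¹' Set.Ioi (a - b ^ 2 / 2) ⊆ Set.Ici (a / Δ - Δ / 2) := by
  intro x (hx : a - b ^ 2 / 2 < b * x)
  have hb0 : 0 < b := by
    rcases hb.eq_or_lt with rfl | hb0
    · linarith
    · exact hb0
  show a / Δ - Δ / 2 ≤ x
  rw [sub_le_iff_le_add, div_le_iff₀ (hb0.trans_le hbΔ)]
  -- `Δx + Δ²/2 - (bx + b²/2) = (Δ - b)(x + (Δ + b)/2)`, and if the second factor is negative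
  -- then `bx + b²/2 < 0 ≤ a`
  nlinarith [mul_nonneg (sub_nonneg.2 hbΔ) hb]

lemma exp_neg_sq_div_two_div_two_le {δ r s : ℝ} (hδ : 0 < δ) (hr : 0 < r)
    (hrδ : 2 * log (1.25 / δ) < r ^ 2) (hrs : r - 1 / (2 * r) ≤ s) :
    exp (-s ^ 2 / 2) / 2 ≤ δ := by
  have hs2 : 2 * log (1.25 / δ) - 1 ≤ s ^ 2 := by
    by_cases hr1 : r ^ 2 ≤ 1
    · nlinarith
    · have hsq : (r - 1 / (2 * r)) ^ 2 = r ^ 2 - 1 + (1 / (2 * r)) ^ 2 := by field_simp; ring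
      have h0 : 0 ≤ r - 1 / (2 * r) := by
        rw [sub_nonneg, div_le_iff₀ (by positivity)]; nlinarith
      nlinarith [pow_le_pow_left₀ h0 hrs 2]
  have hexp_half : exp (1 / 2) ≤ 2.5 :=
    (exp_bound_div_one_sub_of_interval (by norm_num) (by norm_num)).trans (by norm_num)
  calc exp (-s ^ 2 / 2) / 2 ≤ exp (1 / 2 - log (1.25 / δ)) / 2 := by gcongr; linarith
    _ = exp (1 / 2) / 2.5 * δ := by rw [exp_sub, exp_log (by positivity)]; field_simp; ring
    _ ≤ δ := mul_le_of_le_one_left hδ.le ((div_le_one (by norm_num)).2 hexp_half)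

lemma half_add_div_sqrt_two_pi_le {δ r s : ℝ} (hδ0 : 0 < δ) (hδ1 : δ < 1) (hr : 0 < r)
    (hrδ : 2 * log (1.25 / δ) < r ^ 2) (hrs : r - 1 / (2 * r) ≤ s) (hs : s ≤ 0) :
    1 / 2 + -s / √(2 * π) ≤ δ := by
  have hr2 : r ^ 2 ≤ 1 / 2 := by
    have : r ≤ 1 / (2 * r) := by linarith
    rw [le_div_iff₀ (by positivity)] at this
    nlinarith
  -- a small `r` forces `δ > 1.25 · exp (-1/4) ≥ 15/16`
  have hδ : 15 / 16 ≤ δ := by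
    have hexp : exp (1 / 4) ≤ 4 / 3 :=
      (exp_bound_div_one_sub_of_interval (by norm_num) (by norm_num)).trans (by norm_num)
    have : 1.25 / δ ≤ exp (1 / 4) := by
      rw [← exp_log (by positivity : (0 : ℝ) < 1.25 / δ)]
      gcongr
      linarith
    rw [div_le_iff₀ hδ0] at this
    nlinarith
  have hr_lb : 3 / 5 ≤ r := by
    have hexp : exp 0.2 ≤ 1.25 :=
      (exp_bound_div_one_sub_of_interval (by norm_num) (by norm_num)).trans (by norm_num)
    have : 0.2 ≤ log (1.25 / δ) := by
      rw [le_log_iff_exp_le (by positivity)]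
      exact hexp.trans (le_div_self (by norm_num) hδ0 hδ1.le)
    nlinarith
  have hsqrt : 5 / 2 ≤ √(2 * π) :=
    le_sqrt_of_sq_le (by nlinarith [pi_gt_d2])
  have hs_ub : -s / √(2 * π) ≤ 1 / 3 := by
    rw [div_le_iff₀ (by positivity)]
    have : -s ≤ 1 / (2 * r) := by linarith
    have : 1 / (2 * r) ≤ 5 / 6 := by rw [div_le_iff₀ (by positivity)]; linarith
    linarith
  linarith

section Gaussian

variable {v : ℝ≥0}

lemma gaussianPDFReal_eq_exp_mul (m m' x : ℝ) :
    gaussianPDFReal m v x =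
      exp (((x - m') ^ 2 - (x - m) ^ 2) / (2 * v)) * gaussianPDFReal m' v x := by
  simp only [gaussianPDFReal]
  rw [mul_left_comm, ← exp_add]
  ring_nf

lemma gaussianPDF_le_ofReal_exp_mul {m m' x a : ℝ}
    (h : ((x - m') ^ 2 - (x - m) ^ 2) / (2 * v) ≤ a) :
    gaussianPDF m v x ≤ ENNReal.ofReal (exp a) * gaussianPDF m' v x := by
  rw [gaussianPDF, gaussianPDF, gaussianPDFReal_eq_exp_mul m m',
    ← ENNReal.ofReal_mul (by positivity)]
  gcongr
  exact gaussianPDFReal_nonneg _ _ _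

lemma gaussianReal_Ici_self (m : ℝ) (hv : v ≠ 0) : gaussianReal m v (Set.Ici m) = 2⁻¹ := by
  have := nullSingletonClass_gaussianReal (μ := m) hv
  have hsymm : gaussianReal m v (Set.Iio m) = gaussianReal m v (Set.Ici m) :=
    calc gaussianReal m v (Set.Iio m) = gaussianReal m v (Set.Iic m) := measure_congr Iio_ae_eq_Iic
      _ = (gaussianReal m v).map (2 * m - ·) (Set.Ici m) := by
          rw [Measure.map_apply (by fun_prop) measurableSet_Ici]
          congr 1
          ext x
          simp only [Set.mem_Iic, Set.mem_preimage, Set.mem_Ici]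
          constructor <;> intro <;> linarith
      _ = gaussianReal m v (Set.Ici m) := by rw [gaussianReal_map_const_sub]; ring_nf
  have hsum := measure_add_measure_compl (μ := gaussianReal m v) (measurableSet_Ici (a := m))
  rw [Set.compl_Ici, hsymm, measure_univ, ← two_mul, mul_comm] at hsum
  exact ENNReal.eq_inv_of_mul_eq_one_left hsum

lemma gaussianReal_Ici_le_exp (hv : v ≠ 0) {t : ℝ} (ht : 0 ≤ t) :
    gaussianReal 0 v (Set.Ici t) ≤ ENNReal.ofReal (exp (-t ^ 2 / (2 * v)) / 2) :=
  calc gaussianReal 0 v (Set.Ici t)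
      ≤ ENNReal.ofReal (exp (-t ^ 2 / (2 * v))) * gaussianReal t v (Set.Ici t) := by
        rw [gaussianReal_of_var_ne_zero _ hv, gaussianReal_of_var_ne_zero _ hv]
        refine withDensity_apply_le_mul_of_le_on (measurable_gaussianPDF t v) measurableSet_Ici
          fun x (hx : t ≤ x) => gaussianPDF_le_ofReal_exp_mul ?_
        gcongr
        nlinarith [mul_le_mul_of_nonneg_left hx ht]
    _ = ENNReal.ofReal (exp (-t ^ 2 / (2 * v)) / 2) := by
        rw [gaussianReal_Ici_self t hv, ENNReal.ofReal_div_of_pos two_pos, ENNReal.ofReal_ofNat]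
        rfl

lemma gaussianReal_Ici_le_of_nonpos (hv : v ≠ 0) {t : ℝ} (ht : t ≤ 0) :
    gaussianReal 0 v (Set.Ici t) ≤ ENNReal.ofReal (1 / 2 + -t / √(2 * π * v)) := by
  have hpdf : ∀ x, gaussianPDF 0 v x ≤ ENNReal.ofReal (√(2 * π * v))⁻¹ := fun x =>
    ENNReal.ofReal_le_ofReal <| mul_le_of_le_one_right (by positivity) <|
      exp_le_one_iff.2 <| div_nonpos_of_nonpos_of_nonneg (by nlinarith) (by positivity)
  calc gaussianReal 0 v (Set.Ici t)
      ≤ gaussianReal 0 v (Set.Ico t 0) + gaussianReal 0 v (Set.Ici 0) :=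
        (measure_mono (Set.Ico_union_Ici_eq_Ici ht).ge).trans (measure_union_le _ _)
    _ ≤ ENNReal.ofReal (√(2 * π * v))⁻¹ * volume (Set.Ico t 0) + 2⁻¹ := by
        rw [gaussianReal_Ici_self 0 hv, gaussianReal_apply 0 hv, ← setLIntegral_const]
        gcongr with x
        exact hpdf x
    _ = ENNReal.ofReal (1 / 2 + -t / √(2 * π * v)) := by
        rw [Real.volume_Ico, ← ENNReal.ofReal_mul (by positivity), add_comm,
          ← ENNReal.ofReal_ofNat 2, ← ENNReal.ofReal_inv_of_pos two_pos,
          ← ENNReal.ofReal_add (by norm_num)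
            (by nlinarith [inv_nonneg.2 (sqrt_nonneg (2 * π * v))])]
        ring_nf

lemma gaussianReal_preimage_mul_abs (c : ℝ) {S : Set ℝ} (hS : MeasurableSet S) :
    gaussianReal 0 v ((c * ·) ⁻¹' S) = gaussianReal 0 v ((|c| * ·) ⁻¹' S) := by
  rw [← Measure.map_apply (measurable_const_mul c) hS,
    ← Measure.map_apply (measurable_const_mul |c|) hS, gaussianReal_map_const_mul,
    gaussianReal_map_const_mul]
  simp [sq_abs]

lemma gaussianReal_le_exp_mul_add (hv : v ≠ 0) {m m' Δ ε δ : ℝ} (hε : 0 ≤ ε)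
    (hmm' : |m - m'| ≤ Δ)
    (htail : gaussianReal 0 v (Set.Ici (v * ε / Δ - Δ / 2)) ≤ ENNReal.ofReal δ)
    {U : Set ℝ} (hU : MeasurableSet U) :
    gaussianReal m v U ≤ ENNReal.ofReal (exp ε) * gaussianReal m' v U + ENNReal.ofReal δ := by
  have hv0 : (0 : ℝ) < v := NNReal.coe_pos.2 (pos_iff_ne_zero.2 hv)
  set G := {x : ℝ | (x - m') ^ 2 - (x - m) ^ 2 ≤ 2 * v * ε}
  have hG : MeasurableSet G := measurableSet_le (by fun_prop) (by fun_prop)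
  have hbad : (m + ·) ⁻¹' Gᶜ = ((m - m') * ·) ⁻¹' Set.Ioi (v * ε - (m - m') ^ 2 / 2) := by
    ext x
    simp only [G, Set.mem_preimage, Set.mem_compl_iff, Set.mem_ofPred_eq, not_le, Set.mem_Ioi]
    constructor <;> intro <;> nlinarith
  have hGc : gaussianReal m v Gᶜ ≤ ENNReal.ofReal δ :=
    calc gaussianReal m v Gᶜ = gaussianReal 0 v ((m + ·) ⁻¹' Gᶜ) := by
          rw [← Measure.map_apply (measurable_const_add m) hG.compl, gaussianReal_map_const_add,
            zero_add]
      _ = gaussianReal 0 v ((|m - m'| * ·) ⁻¹' Set.Ioi (v * ε - |m - m'| ^ 2 / 2)) := by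
          rw [hbad, gaussianReal_preimage_mul_abs _ measurableSet_Ioi, sq_abs]
      _ ≤ gaussianReal 0 v (Set.Ici (v * ε / Δ - Δ / 2)) :=
          measure_mono (preimage_mul_Ioi_sub_sq_subset_Ici (by positivity) (abs_nonneg _) hmm')
      _ ≤ ENNReal.ofReal δ := htail
  rw [gaussianReal_of_var_ne_zero _ hv, gaussianReal_of_var_ne_zero _ hv]
  refine withDensity_le_mul_add_of_le_on (measurable_gaussianPDF m' v) hG hU
    (fun x hx => gaussianPDF_le_ofReal_exp_mul ?_) ?_
  · have hx : (x - m') ^ 2 - (x - m) ^ 2 ≤ 2 * v * ε := hx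
    rw [div_le_iff₀ (by positivity)]
    linarith
  · rwa [← gaussianReal_of_var_ne_zero _ hv]

lemma gaussianReal_Ici_mul_le {σ δ r s : ℝ} (hvσ : (v : ℝ) = σ ^ 2) (hσ : 0 < σ)
    (hδ0 : 0 < δ) (hδ1 : δ < 1) (hr : 0 < r) (hrδ : 2 * log (1.25 / δ) < r ^ 2)
    (hrs : r - 1 / (2 * r) ≤ s) :
    gaussianReal 0 v (Set.Ici (σ * s)) ≤ ENNReal.ofReal δ := by
  have hv : v ≠ 0 := by rw [ne_eq, ← NNReal.coe_eq_zero, hvσ]; positivity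
  rcases le_total 0 s with hs | hs
  · refine (gaussianReal_Ici_le_exp hv (by positivity)).trans (ENNReal.ofReal_le_ofReal ?_)
    have hexp : -(σ * s) ^ 2 / (2 * σ ^ 2) = -s ^ 2 / 2 := by field_simp
    rw [hvσ, hexp]
    exact exp_neg_sq_div_two_div_two_le hδ0 hr hrδ hrs
  · refine (gaussianReal_Ici_le_of_nonpos hv (mul_nonpos_of_nonneg_of_nonpos hσ.le hs)).trans
      (ENNReal.ofReal_le_ofReal ?_)
    have hsqrt : -(σ * s) / √(2 * π * σ ^ 2) = -s / √(2 * π) := by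
      rw [sqrt_mul (by positivity), sqrt_sq hσ.le]
      field_simp
    rw [hvσ, hsqrt]
    exact half_add_div_sqrt_two_pi_le hδ0 hδ1 hr hrδ hrs hs

end Gaussian

/-- The Gaussian mechanism with noise scale
`σ > (Δf/ε)·√(2 log(1.25/δ))` is (ε, δ)-differentially private. -/
theorem stmt_5 {X : Type*} (Neighbor : X → X → Prop)
    (ε δ Δf σ : ℝ) (hε0 : 0 < ε) (hε1 : ε < 1) (hδ0 : 0 < δ) (hδ1 : δ < 1) (hΔf : 0 < Δf)
    (f : X → ℝ)
    (hsens : ∀ D D', Neighbor D D' → |f D - f D'| ≤ Δf)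
    (hσ : σ > (Δf / ε) * Real.sqrt (2 * Real.log (1.25 / δ))) :
    ∀ D D', Neighbor D D' → ∀ U : Set ℝ, MeasurableSet U →
      (gaussianReal 0 ⟨σ ^ 2, sq_nonneg σ⟩).map (fun z => f D + z) U ≤
        ENNReal.ofReal (Real.exp ε) *
          (gaussianReal 0 ⟨σ ^ 2, sq_nonneg σ⟩).map (fun z => f D' + z) U
        + ENNReal.ofReal δ := by
  intro D D' hN U hU
  rw [gt_iff_lt, div_mul_eq_mul_div, div_lt_iff₀ hε0] at hσ
  have hσ0 : 0 < σ := by nlinarith [sqrt_nonneg (2 * log (1.25 / δ))]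
  set r := σ * ε / Δf
  have hr : 0 < r := by positivity
  have hrδ : 2 * log (1.25 / δ) < r ^ 2 := lt_sq_of_sqrt_lt (by rw [lt_div_iff₀ hΔf]; linarith)
  have hrs : r - 1 / (2 * r) ≤ r - ε / (2 * r) := by gcongr
  have ht : σ ^ 2 * ε / Δf - Δf / 2 = σ * (r - ε / (2 * r)) := by simp only [r]; field_simp
  set v : ℝ≥0 := ⟨σ ^ 2, sq_nonneg σ⟩
  have hvσ : (v : ℝ) = σ ^ 2 := rfl
  rw [gaussianReal_map_const_add, gaussianReal_map_const_add, zero_add, zero_add]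
  refine gaussianReal_le_exp_mul_add ?_ hε0.le (hsens D D' hN) ?_ hU
  · rw [ne_eq, ← NNReal.coe_eq_zero, hvσ]; positivity
  · rw [hvσ, ht]
    exact gaussianReal_Ici_mul_le hvσ hσ0 hδ0 hδ1 hr hrδ hrs
end

section
/- For decreasing positive reals Δ_1 ≥ Δ_2 ≥ ... ≥ Δ_K > 0, the telescoping-type sum Δ_1·(1/Δ_1²) + ∑_{k=2}^K Δ_k·(1/Δ_k² − 1/Δ_{k−1}²) is at most 2/Δ_K. -/
/-!
Each summand is dominated by a telescoping increment: for `b > 0`,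
`b (1/b² - 1/a²) = 2/b - 2/a - b (1/b - 1/a)²`. Summing telescopes to
`1/Δ₀ + 2/Δ_{K-1} - 2/Δ₀ ≤ 2/Δ_{K-1}`.
-/

open Finset

theorem Finset.sum_Ico_one_sub_pred {G : Type*} [AddCommGroup G] (f : ℕ → G) (n : ℕ) :
    ∑ k ∈ Ico 1 n, (f k - f (k - 1)) = f (n - 1) - f 0 := by
  cases n with
  | zero => simp
  | succ n =>
    rw [sum_Ico_eq_sum_range]
    simpa [add_comm 1] using sum_range_sub f n

theorem mul_one_div_sq_sub_one_div_sq_le {a b : ℝ} (hb : 0 < b) :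
    b * (1 / b ^ 2 - 1 / a ^ 2) ≤ 2 / b - 2 / a := by
  have hbinv : b * b⁻¹ = 1 := mul_inv_cancel₀ hb.ne'
  have key : 2 / b - 2 / a - b * (1 / b ^ 2 - 1 / a ^ 2) = b * (1 / b - 1 / a) ^ 2 := by
    simp only [div_eq_mul_inv]
    linear_combination (2 * a⁻¹ - 2 * b⁻¹) * hbinv
  linarith [mul_nonneg hb.le (sq_nonneg (1 / b - 1 / a))]

theorem stmt_9_general (K : ℕ) (hK : 0 < K) (Δ : ℕ → ℝ)
    (hpos : ∀ k < K, 0 < Δ k) :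
    Δ 0 * (1 / (Δ 0) ^ 2) +
        ∑ k ∈ Finset.Ico 1 K, Δ k * (1 / (Δ k) ^ 2 - 1 / (Δ (k - 1)) ^ 2)
      ≤ 2 / Δ (K - 1) := by
  have hfirst : Δ 0 * (1 / Δ 0 ^ 2) = 1 / Δ 0 := by
    field_simp [(hpos 0 hK).ne']
  have hsum : ∑ k ∈ Ico 1 K, Δ k * (1 / Δ k ^ 2 - 1 / Δ (k - 1) ^ 2)
      ≤ ∑ k ∈ Ico 1 K, (2 / Δ k - 2 / Δ (k - 1)) :=
    sum_le_sum fun k hk ↦ mul_one_div_sq_sub_one_div_sq_le (hpos k (mem_Ico.mp hk).2)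
  calc _ ≤ 1 / Δ 0 + (2 / Δ (K - 1) - 2 / Δ 0) := by
        rw [hfirst, ← sum_Ico_one_sub_pred (fun k ↦ 2 / Δ k)]
        exact add_le_add_right hsum _
    _ = 2 / Δ (K - 1) - 1 / Δ 0 := by ring
    _ ≤ 2 / Δ (K - 1) := sub_le_self _ (one_div_pos.mpr (hpos 0 hK)).le

/-- Telescoping-type bound: for decreasing positive gaps `Δ_1 ≥ ... ≥ Δ_K > 0`,
`Δ_1/Δ_1² + ∑_{k≥2} Δ_k (1/Δ_k² - 1/Δ_{k-1}²) ≤ 2/Δ_K`. -/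
theorem stmt_9 (K : ℕ) (hK : 0 < K) (Δ : ℕ → ℝ)
    (hpos : ∀ k < K, 0 < Δ k)
    (hmono : ∀ i j : ℕ, i ≤ j → j < K → Δ j ≤ Δ i) :
    Δ 0 * (1 / (Δ 0) ^ 2) +
        ∑ k ∈ Finset.Ico 1 K, Δ k * (1 / (Δ k) ^ 2 - 1 / (Δ (k - 1)) ^ 2)
      ≤ 2 / Δ (K - 1) :=
  stmt_9_general K hK Δ hpos
end
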